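/- arXiv:2302.09481 — 3 statements merged into one kernel-verified Lean document; each statement's English description precedes it below -/
import Mathlib

section
/- The (3,1)-QRAC decoding succeeds with probability 1/2 + 1/(2√3): for all (x₁,x₂,x₃) ∈ {0,1}³ and each i ∈ {1,2,3}, measuring ρ_{x₁,x₂,x₃} with the projective measurement in the X, Y, or Z eigenbasis respectively yields outcome x_i with probability 1/2 + 1/(2√3). -/
open Matrix

noncomputable def PX : Matrix (Fin 2) (Fin 2) ℂ := !![0, 1; 1, 0]
noncomputable def PY : Matrix (Fin 2) (Fin 2) ℂ := !![0, -Complex.I; Complex.I, 0]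
noncomputable def PZ : Matrix (Fin 2) (Fin 2) ℂ := !![1, 0; 0, -1]

noncomputable def sgn (b : Bool) : ℂ := if b then -1 else 1

noncomputable def rho3 (x₁ x₂ x₃ : Bool) : Matrix (Fin 2) (Fin 2) ℂ :=
  ((1 : ℂ)/2) • (1 + ((1 : ℂ)/(Real.sqrt 3 : ℂ)) • (sgn x₁ • PX + sgn x₂ • PY + sgn x₃ • PZ))

noncomputable def meas (P : Matrix (Fin 2) (Fin 2) ℂ) (b : Bool) : Matrix (Fin 2) (Fin 2) ℂ :=
  ((1 : ℂ)/2) • (1 + sgn b • P)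

/-! The Pauli matrices are traceless and orthogonal for the trace form, with `tr (P * P) = 2`.
Hence for the Bloch vector `v = (±1, ±1, ±1) / √3` of `ρ` and a measurement of `P_i` with sign
`s = ±1`, `tr (½(1 + s P_i) · ½(1 + v·σ)) = ¼ (2 + 2 s v_i)`, which is `½ + 1/(2√3)` exactly when
`s` is the sign of `v_i`. -/

lemma sgn_mul_self (b : Bool) : sgn b * sgn b = 1 := by
  cases b <;> simp [sgn]

section PauliSum

variable (a b c : ℂ)

lemma trace_pauliSum : (a • PX + b • PY + c • PZ).trace = 0 := by
  simp [PX, PY, PZ, trace_fin_two]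

lemma trace_PX_mul_pauliSum : (PX * (a • PX + b • PY + c • PZ)).trace = 2 * a := by
  simp [PX, PY, PZ, trace_fin_two]; ring

lemma trace_PY_mul_pauliSum : (PY * (a • PX + b • PY + c • PZ)).trace = 2 * b := by
  simp [PX, PY, PZ, trace_fin_two]; linear_combination (-2 * b) * Complex.I_sq

lemma trace_PZ_mul_pauliSum : (PZ * (a • PX + b • PY + c • PZ)).trace = 2 * c := by
  simp [PX, PY, PZ, trace_fin_two]; ring

end PauliSum

lemma trace_half_one_add_smul_mul_half_one_add_smul {n : Type*} [Fintype n] [DecidableEq n]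
    (A B : Matrix n n ℂ) (a b : ℂ) :
    (((1 : ℂ)/2) • (1 + a • A) * ((1 : ℂ)/2) • (1 + b • B)).trace
      = (Fintype.card n + a * A.trace + b * B.trace + a * b * (A * B).trace) / 4 := by
  simp only [Matrix.smul_mul, Matrix.mul_smul, add_mul, mul_add, one_mul, mul_one, trace_smul,
    trace_add, trace_one, smul_eq_mul]
  ring

lemma trace_meas_mul_half_one_add_smul (P S : Matrix (Fin 2) (Fin 2) ℂ) (b : Bool) (c : ℂ)
    (hP : P.trace = 0) (hS : S.trace = 0) (hPS : (P * S).trace = 2 * sgn b) :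
    (meas P b * ((1 : ℂ)/2) • (1 + c • S)).trace = (1 + c) / 2 := by
  rw [meas, trace_half_one_add_smul_mul_half_one_add_smul, hP, hS, hPS,
    Fintype.card_fin]
  linear_combination (c / 2) * sgn_mul_self b

theorem qrac31_success_probability (x₁ x₂ x₃ : Bool) :
    (meas PX x₁ * rho3 x₁ x₂ x₃).trace = ((1 : ℝ)/2 + 1/(2 * Real.sqrt 3) : ℝ) ∧
    (meas PY x₂ * rho3 x₁ x₂ x₃).trace = ((1 : ℝ)/2 + 1/(2 * Real.sqrt 3) : ℝ) ∧
    (meas PZ x₃ * rho3 x₁ x₂ x₃).trace = ((1 : ℝ)/2 + 1/(2 * Real.sqrt 3) : ℝ) := by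
  have hbias :
      (((1 : ℝ)/2 + 1/(2 * Real.sqrt 3) : ℝ) : ℂ) = (1 + (1 : ℂ)/(Real.sqrt 3 : ℂ)) / 2 := by
    push_cast; ring
  simp only [rho3, hbias]
  refine ⟨?_, ?_, ?_⟩ <;>
    refine trace_meas_mul_half_one_add_smul _ _ _ _ (by simp [PX, PY, PZ, trace_fin_two])
      (trace_pauliSum ..) ?_
  · rw [trace_PX_mul_pauliSum]
  · rw [trace_PY_mul_pauliSum]
  · rw [trace_PZ_mul_pauliSum]
end

section
/- Given real numbers x, y, λ ∈ [0,1], ε ∈ [0,1/2] with x + y ≥ ε, −(3/2)λ ≤ x ≤ (3/2)λ, and −(√3/2)(1−λ) ≤ y ≤ (√3/2)(1−λ), it holds that x + (9/2)y ≥ max{ −(7√3/4)(1−λ) + ε, −(21/4)λ + (9/2)ε }. -/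
theorem key_optimization_step (x y lam eps : ℝ)
    (hlam : 0 ≤ lam ∧ lam ≤ 1) (heps : 0 ≤ eps ∧ eps ≤ 1/2)
    (hsum : x + y ≥ eps)
    (hx : -(3/2) * lam ≤ x ∧ x ≤ (3/2) * lam)
    (hy : -(Real.sqrt 3 / 2) * (1 - lam) ≤ y ∧ y ≤ (Real.sqrt 3 / 2) * (1 - lam)) :
    x + (9/2) * y ≥
      max (-(7 * Real.sqrt 3 / 4) * (1 - lam) + eps) (-(21/4) * lam + (9/2) * eps) := by
  rw [ge_iff_le, max_le_iff]
  constructor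
  · linarith [hy.1]
  · linarith [hx.2]
end

section
/- For all λ ∈ [0,1] and ε ∈ [0,1/2], the quantity max{(81 − 14√3 + 14√3 λ + 8ε)/(81 + 162ε), (27 − 14λ + 12ε)/(27 + 54ε)} is strictly greater than 1/2 if and only if either ε < (81 − √3)/(146 + 30√3), or [ε ≥ (81 − √3)/(146 + 30√3) and (λ < 27/28 − (15/14)ε or λ > −27√3/28 + 1 + (73√3/42)ε)]. -/
theorem nontrivial_ratio_condition (lam eps : ℝ)
    (hlam : 0 ≤ lam ∧ lam ≤ 1) (heps : 0 ≤ eps ∧ eps ≤ 1/2) :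
    max ((81 - 14 * Real.sqrt 3 + 14 * Real.sqrt 3 * lam + 8 * eps) / (81 + 162 * eps))
        ((27 - 14 * lam + 12 * eps) / (27 + 54 * eps)) > 1/2 ↔
    (eps < (81 - Real.sqrt 3) / (146 + 30 * Real.sqrt 3) ∨
      (eps ≥ (81 - Real.sqrt 3) / (146 + 30 * Real.sqrt 3) ∧
        (lam < 27/28 - (15/14) * eps ∨
         lam > -(27 * Real.sqrt 3 / 28) + 1 + (73 * Real.sqrt 3 / 42) * eps))) := by
  obtain ⟨he0, he1⟩ := heps
  set s := Real.sqrt 3 with hs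
  have hs3 : s ^ 2 = 3 := Real.sq_sqrt (by norm_num)
  have hs1 : 1 < s := by
    rw [hs]
    nlinarith [Real.sq_sqrt (show (0:ℝ) ≤ 3 by norm_num),
      Real.sqrt_nonneg (3:ℝ)]
  have hd1 : (0:ℝ) < 81 + 162 * eps := by linarith
  have hd2 : (0:ℝ) < 27 + 54 * eps := by linarith
  have hden : (0:ℝ) < 146 + 30 * s := by linarith
  have key1 : (1/2 < (81 - 14 * s + 14 * s * lam + 8 * eps) / (81 + 162 * eps)) ↔
      lam > -(27 * s / 28) + 1 + (73 * s / 42) * eps := by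
    rw [div_lt_div_iff₀ (by norm_num) hd1]
    constructor
    · intro h
      nlinarith [hs3, hs1]
    · intro h
      nlinarith [hs3, hs1]
  have key2 : (1/2 < (27 - 14 * lam + 12 * eps) / (27 + 54 * eps)) ↔
      lam < 27/28 - (15/14) * eps := by
    rw [div_lt_div_iff₀ (by norm_num) hd2]
    constructor <;> intro h <;> linarith
  have hmax : max ((81 - 14 * s + 14 * s * lam + 8 * eps) / (81 + 162 * eps))
        ((27 - 14 * lam + 12 * eps) / (27 + 54 * eps)) > 1/2 ↔
      (lam < 27/28 - (15/14) * eps ∨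
       lam > -(27 * s / 28) + 1 + (73 * s / 42) * eps) := by
    rw [gt_iff_lt, lt_max_iff, key1, key2]
    tauto
  rw [hmax]
  constructor
  · intro h
    by_cases hle : eps < (81 - s) / (146 + 30 * s)
    · exact Or.inl hle
    · exact Or.inr ⟨le_of_not_gt hle, h⟩
  · rintro (h | ⟨_, h⟩)
    · -- eps < eps₀ implies B < A, so any lam works
      rw [lt_div_iff₀ hden] at h
      by_cases hl : lam < 27/28 - (15/14) * eps
      · exact Or.inl hl
      · push_neg at hl
        right
        nlinarith [hs3, hs1]
    · exact h
end
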